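/- arXiv:0706.2124 — 7 statements merged into one kernel-verified Lean document; each statement's English description precedes it below -/
import Mathlib

section
/- Fix integers s ≥ 2, Δ ≥ 1, and a positive integer n with n < (Δ+1)/(s-1). Let G be the graph on vertex set {1,...,Δ+1} × {1,...,n}, with parts V_i = {(i,j) : 1 ≤ j ≤ n}, where (i,j) and (i',j') are adjacent iff j = j' and i ≠ i'. Then G has maximum degree Δ, local degree 1 (every vertex has at most one neighbor in each part other than its own), and G has no K_s-free transversal: every transversal contains a clique of size s. -/
/-!
Every neighbour of `(i, j)` is `(i', j)` with `i' ≠ i`, which gives both degree statements.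
A transversal chooses a column `j` for each of the `Δ + 1` parts; as there are only `n` columns
and `n (s - 1) < Δ + 1`, some column is chosen by `s` parts, and those `s` vertices form a clique.
-/

theorem Finset.exists_card_eq_of_card_mul_lt_card {α β : Type*} [Fintype α] [Fintype β]
    (g : α → β) {s : ℕ} (hsize : Fintype.card β * (s - 1) < Fintype.card α) :
    ∃ S : Finset α, S.card = s ∧ ∀ i ∈ S, ∀ j ∈ S, g i = g j := by
  classical
  obtain ⟨b, -, hb⟩ := exists_lt_card_fiber_of_mul_lt_card_of_maps_to
    (f := g) (s := univ) (t := univ) (fun _ _ => mem_univ _) (by simpa using hsize)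
  obtain ⟨S, hS, rfl⟩ := exists_subset_card_eq (s := univ.filter (g · = b)) (n := s) (by omega)
  refine ⟨S, rfl, fun i hi j hj => ?_⟩
  rw [(mem_filter.1 (hS hi)).2, (mem_filter.1 (hS hj)).2]

namespace SimpleGraph

variable {α β : Type*}

/-- The parts of this multipartite graph are the fibres of `Prod.fst`. -/
def sameSnd (α β : Type*) : SimpleGraph (α × β) :=
  fromRel fun a b => a.2 = b.2

theorem sameSnd_adj {v w : α × β} : (sameSnd α β).Adj v w ↔ v.1 ≠ w.1 ∧ v.2 = w.2 := by
  simp only [sameSnd, fromRel_adj, ne_eq, Prod.ext_iff]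
  tauto

theorem neighborSet_sameSnd (v : α × β) :
    (sameSnd α β).neighborSet v = (·, v.2) '' {v.1}ᶜ := by
  ext ⟨a, b⟩
  simp only [mem_neighborSet, sameSnd_adj, Set.mem_image, Set.mem_compl_iff,
    Set.mem_singleton_iff, Prod.mk.injEq]
  constructor
  · rintro ⟨hne, rfl⟩
    exact ⟨a, Ne.symm hne, rfl, rfl⟩
  · rintro ⟨a, hne, rfl, rfl⟩
    exact ⟨Ne.symm hne, rfl⟩

theorem ncard_neighborSet_sameSnd [Finite α] (v : α × β) :
    ((sameSnd α β).neighborSet v).ncard = Nat.card α - 1 := by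
  rw [neighborSet_sameSnd, Set.ncard_image_of_injective _ fun a b h => (Prod.ext_iff.1 h).1,
    Set.ncard_compl, Set.ncard_singleton]

theorem ncard_neighborSet_inter_fst_le_one (v : α × β) (i : α) :
    ((sameSnd α β).neighborSet v ∩ {w | w.1 = i}).ncard ≤ 1 := by
  refine (Set.ncard_le_ncard (t := {(i, v.2)}) ?_).trans (Set.ncard_singleton _).le
  rintro ⟨a, b⟩ ⟨hadj, rfl⟩
  rw [mem_neighborSet, sameSnd_adj] at hadj
  simp [hadj.2]

theorem exists_clique_of_transversal_sameSnd [Fintype α] [Fintype β] {s : ℕ}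
    (hsize : Fintype.card β * (s - 1) < Fintype.card α) (f : α → α × β) (hf : ∀ i, (f i).1 = i) :
    ∃ S : Finset α, S.card = s ∧ ∀ i ∈ S, ∀ j ∈ S, i ≠ j → (sameSnd α β).Adj (f i) (f j) := by
  obtain ⟨S, hcard, hS⟩ := Finset.exists_card_eq_of_card_mul_lt_card (fun i => (f i).2) hsize
  refine ⟨S, hcard, fun i hi j hj hij => sameSnd_adj.2 ⟨?_, hS i hi j hj⟩⟩
  rwa [hf, hf]

end SimpleGraph

theorem stmt_1_general (s Δ n : ℕ)
    (hsize : n * (s - 1) < Δ + 1)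
    (G : SimpleGraph (Fin (Δ + 1) × Fin n))
    (hG : G = SimpleGraph.fromRel (fun a b => a.2 = b.2)) :
    (∀ v, (G.neighborSet v).ncard = Δ) ∧
    (∀ (v : Fin (Δ + 1) × Fin n) (i : Fin (Δ + 1)), i ≠ v.1 →
      (G.neighborSet v ∩ {w : Fin (Δ + 1) × Fin n | w.1 = i}).ncard ≤ 1) ∧
    (∀ f : Fin (Δ + 1) → Fin (Δ + 1) × Fin n, (∀ i, (f i).1 = i) →
      ∃ S : Finset (Fin (Δ + 1)), S.card = s ∧
        ∀ i ∈ S, ∀ j ∈ S, i ≠ j → G.Adj (f i) (f j)) := by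
  change G = SimpleGraph.sameSnd _ _ at hG
  subst hG
  refine ⟨fun v => ?_, fun v i _ => SimpleGraph.ncard_neighborSet_inter_fst_le_one v i,
    SimpleGraph.exists_clique_of_transversal_sameSnd (by simpa using hsize)⟩
  simp [SimpleGraph.ncard_neighborSet_sameSnd]

/-- The graph on {1,…,Δ+1} × {1,…,n} with (i,j) ~ (i',j') iff j = j' and i ≠ i',
with parts V_i = {(i,j) : j}, where n(s-1) < Δ+1: it has maximum degree Δ,
local degree at most 1, and every transversal contains a clique of size s. -/
theorem stmt_1 (s Δ n : ℕ) (hs : 2 ≤ s) (hΔ : 1 ≤ Δ) (hn : 0 < n)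
    (hsize : n * (s - 1) < Δ + 1)
    (G : SimpleGraph (Fin (Δ + 1) × Fin n))
    (hG : G = SimpleGraph.fromRel (fun a b => a.2 = b.2)) :
    (∀ v, (G.neighborSet v).ncard = Δ) ∧
    (∀ (v : Fin (Δ + 1) × Fin n) (i : Fin (Δ + 1)), i ≠ v.1 →
      (G.neighborSet v ∩ {w : Fin (Δ + 1) × Fin n | w.1 = i}).ncard ≤ 1) ∧
    (∀ f : Fin (Δ + 1) → Fin (Δ + 1) × Fin n, (∀ i, (f i).1 = i) →
      ∃ S : Finset (Fin (Δ + 1)), S.card = s ∧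
        ∀ i ∈ S, ∀ j ∈ S, i ≠ j → G.Adj (f i) (f j)) :=
  stmt_1_general s Δ n hsize G hG
end

section
/- For every graph G with maximum degree Δ and every integer s ≥ 2, the vertex set of G can be partitioned into s-1 parts such that the subgraph induced by each part has maximum degree at most ⌊Δ/(s-1)⌋. -/
/-!
Take a colouring `c` with `k` colours minimising the number of monochromatic edges. Recolouring a
vertex `v` with colour `i` changes that number by the number of neighbours of `v` coloured `i` minus
the number coloured `c v`, so at a minimum no colour occurs less often in the neighbourhood of `v`
than `c v` does. As the `k` colour classes partition the at most `Δ` neighbours of `v`, the class of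
`c v` has at most `Δ / k` elements.
-/

open Finset

theorem Fintype.sum_sum_eq_two_nsmul_add_sum_sum_compl {ι M : Type*} [Fintype ι] [DecidableEq ι]
    [AddCommMonoid M] (a : ι → ι → M) (hsymm : ∀ i j, a i j = a j i) (i : ι) (hdiag : a i i = 0) :
    ∑ j, ∑ k, a j k = 2 • ∑ k, a i k + ∑ j ∈ {i}ᶜ, ∑ k ∈ {i}ᶜ, a j k := by
  have hcol : ∑ j ∈ {i}ᶜ, a j i = ∑ k, a i k := by
    rw [Fintype.sum_eq_add_sum_compl i (a i), hdiag, zero_add]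
    exact Finset.sum_congr rfl fun j _ => hsymm j i
  calc ∑ j, ∑ k, a j k = ∑ k, a i k + ∑ j ∈ {i}ᶜ, (a j i + ∑ k ∈ {i}ᶜ, a j k) := by
        rw [Fintype.sum_eq_add_sum_compl i]
        exact congrArg _ (Finset.sum_congr rfl fun j _ => Fintype.sum_eq_add_sum_compl i (a j))
    _ = 2 • ∑ k, a i k + ∑ j ∈ {i}ᶜ, ∑ k ∈ {i}ᶜ, a j k := by
        rw [sum_add_distrib, hcol, two_nsmul, add_assoc]

namespace SimpleGraph

variable {V α : Type*} [Fintype V] (G : SimpleGraph V) [DecidableRel G.Adj] [DecidableEq α]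

def colorNeighborFinset (c : V → α) (v : V) (i : α) : Finset V :=
  (G.neighborFinset v).filter (c · = i)

/-- Twice the number of monochromatic edges of `c`. -/
def sameColorAdjCount (c : V → α) : ℕ :=
  ∑ u, ∑ w, if G.Adj u w ∧ c w = c u then 1 else 0

theorem sum_card_colorNeighborFinset [Fintype α] (c : V → α) (v : V) :
    ∑ i, #(G.colorNeighborFinset c v i) = G.degree v :=
  (card_eq_sum_card_fiberwise fun w _ => mem_univ (c w)).symm

theorem sum_ite_adj_eq_card_colorNeighborFinset (c : V → α) (v : V) (i : α) :
    (∑ w, if G.Adj v w ∧ c w = i then 1 else 0) = #(G.colorNeighborFinset c v i) := by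
  rw [sum_boole, Nat.cast_id, colorNeighborFinset]
  congr 1
  ext w
  simp

section Recolouring

variable [DecidableEq V]

theorem colorNeighborFinset_update_self (c : V → α) (v : V) (i j : α) :
    G.colorNeighborFinset (Function.update c v i) v j = G.colorNeighborFinset c v j :=
  filter_congr fun w hw => by rw [Function.update_of_ne ((G.mem_neighborFinset v w).1 hw).ne']

theorem sameColorAdjCount_eq (c : V → α) (v : V) :
    G.sameColorAdjCount c = 2 * #(G.colorNeighborFinset c v (c v)) +
      ∑ u ∈ {v}ᶜ, ∑ w ∈ {v}ᶜ, if G.Adj u w ∧ c w = c u then 1 else 0 := by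
  rw [sameColorAdjCount, Fintype.sum_sum_eq_two_nsmul_add_sum_sum_compl _ _ v (by simp),
    sum_ite_adj_eq_card_colorNeighborFinset, smul_eq_mul]
  intro u w
  simp only [G.adj_comm u w, eq_comm]

theorem sameColorAdjCount_update (c : V → α) (v : V) (i : α) :
    G.sameColorAdjCount (Function.update c v i) + 2 * #(G.colorNeighborFinset c v (c v)) =
      G.sameColorAdjCount c + 2 * #(G.colorNeighborFinset c v i) := by
  have hrest : ∀ u ∈ ({v}ᶜ : Finset V), ∀ w ∈ ({v}ᶜ : Finset V),
      (if G.Adj u w ∧ Function.update c v i w = Function.update c v i u then 1 else 0) =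
        if G.Adj u w ∧ c w = c u then 1 else 0 := by
    intro u hu w hw
    rw [Function.update_of_ne (by simpa using hw), Function.update_of_ne (by simpa using hu)]
  rw [G.sameColorAdjCount_eq c v, G.sameColorAdjCount_eq _ v, Function.update_self,
    colorNeighborFinset_update_self,
    Finset.sum_congr rfl fun u hu => Finset.sum_congr rfl (hrest u hu)]
  omega

end Recolouring

theorem exists_coloring_card_colorNeighborFinset_self_le [Finite α] [Nonempty α] :
    ∃ c : V → α, ∀ v i, #(G.colorNeighborFinset c v (c v)) ≤ #(G.colorNeighborFinset c v i) := by
  classical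
  obtain ⟨c, hmin⟩ := Finite.exists_min G.sameColorAdjCount (α := V → α)
  refine ⟨c, fun v i => ?_⟩
  have := G.sameColorAdjCount_update c v i
  have := hmin (Function.update c v i)
  omega

theorem exists_coloring_card_colorNeighborFinset_self_le_div [Fintype α] [Nonempty α] {Δ : ℕ}
    (hdeg : ∀ v, G.degree v ≤ Δ) :
    ∃ c : V → α, ∀ v, #(G.colorNeighborFinset c v (c v)) ≤ Δ / Fintype.card α := by
  obtain ⟨c, hc⟩ := G.exists_coloring_card_colorNeighborFinset_self_le (α := α)
  refine ⟨c, fun v => (Nat.le_div_iff_mul_le Fintype.card_pos).2 ?_⟩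
  calc #(G.colorNeighborFinset c v (c v)) * Fintype.card α
      = Fintype.card α • #(G.colorNeighborFinset c v (c v)) := by rw [smul_eq_mul, mul_comm]
    _ ≤ ∑ i, #(G.colorNeighborFinset c v i) := card_nsmul_le_sum _ _ _ fun i _ => hc v i
    _ = G.degree v := G.sum_card_colorNeighborFinset c v
    _ ≤ Δ := hdeg v

end SimpleGraph

theorem stmt_4_general {V : Type} [Fintype V] (G : SimpleGraph V)
    [DecidableRel G.Adj] (Δ s : ℕ) (hs : 2 ≤ s)
    (hdeg : ∀ v, G.degree v ≤ Δ) :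
    ∃ c : V → Fin (s - 1),
      ∀ v, ((G.neighborFinset v).filter fun w => c w = c v).card ≤ Δ / (s - 1) := by
  have : NeZero (s - 1) := ⟨by omega⟩
  obtain ⟨c, hc⟩ := G.exists_coloring_card_colorNeighborFinset_self_le_div (α := Fin (s - 1)) hdeg
  exact ⟨c, fun v => (hc v).trans_eq (by rw [Fintype.card_fin])⟩

/-- For every graph G of maximum degree at most Δ and every s ≥ 2, the vertex set
can be partitioned into s-1 parts (given by a coloring with s-1 colors) such that
each part induces a subgraph of maximum degree at most ⌊Δ/(s-1)⌋. -/
theorem stmt_4 {V : Type} [Fintype V] [DecidableEq V] (G : SimpleGraph V)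
    [DecidableRel G.Adj] (Δ s : ℕ) (hs : 2 ≤ s)
    (hdeg : ∀ v, G.degree v ≤ Δ) :
    ∃ c : V → Fin (s - 1),
      ∀ v, ((G.neighborFinset v).filter fun w => c w = c v).card ≤ Δ / (s - 1) :=
  stmt_4_general G Δ s hs hdeg
end

section
/- Suppose that for every multipartite graph with maximum degree Δ, local degree at most γΔ, and parts of size at least (1+ε)Δ there exists an independent transversal. Then for any n graphs H_1,...,H_n on a common vertex set V, each of maximum degree at most Δ, with n ≥ (1+ε)Δ, there is a partition V = I_1 ∪ ... ∪ I_n such that I_i is an independent set in H_i for every i. (In this application the constructed multipartite graph has local degree 0, since no edges join distinct copies of the same vertex's part beyond within a single index.) -/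
/-!
Blow each vertex `v` up into the part `{v} × Fin n` and join `(v, i)` to `(w, i)` exactly when
`vw` is an edge of `H i`. A vertex `(v, i)` has the same degree as `v` in `H i` and at most one
neighbour `(w, i)` in any other part, so the hypothesis provides an independent transversal
`v ↦ (v, g v)`, and `g` is the required colouring.
-/

namespace SimpleGraph

variable {V ι : Type*}

def layerUnion (H : ι → SimpleGraph V) : SimpleGraph (V × ι) where
  Adj a b := a.2 = b.2 ∧ (H a.2).Adj a.1 b.1
  symm := ⟨fun _ _ ⟨hi, h⟩ => ⟨hi.symm, hi ▸ h.symm⟩⟩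
  loopless := ⟨fun a ⟨_, h⟩ => (H a.2).irrefl h⟩

variable (H : ι → SimpleGraph V)

@[simp]
theorem layerUnion_adj {a b : V × ι} :
    (layerUnion H).Adj a b ↔ a.2 = b.2 ∧ (H a.2).Adj a.1 b.1 :=
  Iff.rfl

theorem neighborSet_layerUnion (v : V) (i : ι) :
    (layerUnion H).neighborSet (v, i) = (·, i) '' (H i).neighborSet v := by
  ext ⟨w, j⟩
  simp only [mem_neighborSet, layerUnion_adj, Set.mem_image, Prod.mk.injEq]
  constructor
  · rintro ⟨rfl, h⟩
    exact ⟨w, h, rfl, rfl⟩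
  · rintro ⟨w, h, rfl, rfl⟩
    exact ⟨rfl, h⟩

theorem ncard_neighborSet_layerUnion (v : V) (i : ι) :
    ((layerUnion H).neighborSet (v, i)).ncard = ((H i).neighborSet v).ncard := by
  rw [neighborSet_layerUnion]
  exact Set.ncard_image_of_injective _ fun _ _ h => (Prod.mk.inj h).1

theorem ncard_neighborSet_layerUnion_inter_fiber_le_one (a : V × ι) (w : V) :
    ((layerUnion H).neighborSet a ∩ Prod.fst ⁻¹' {w}).ncard ≤ 1 := by
  refine (Set.ncard_le_ncard ?_ (Set.finite_singleton (w, a.2))).trans (Set.ncard_singleton _).le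
  rintro ⟨u, j⟩ ⟨⟨hj, -⟩, rfl⟩
  exact Prod.ext rfl hj.symm

theorem not_adj_of_layerUnion_transversal {f : V → V × ι} (hf : ∀ v, (f v).1 = v)
    (hind : ∀ v w, v ≠ w → ¬ (layerUnion H).Adj (f v) (f w)) {v w : V} (hvw : v ≠ w)
    (hvw' : (f v).2 = (f w).2) : ¬ (H (f v).2).Adj v w := fun hadj =>
  hind v w hvw ⟨hvw', by rwa [hf v, hf w]⟩

end SimpleGraph

open SimpleGraph

theorem stmt_9_general (Δ n : ℕ) (ε γ : ℝ)
    (hγΔ : (1 : ℝ) ≤ γ * Δ)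
    (hyp : ∀ (U κ : Type) [Finite U] (G : SimpleGraph U) (P : κ → Set U),
      (∀ u, ∃! i, u ∈ P i) →
      (∀ u, (G.neighborSet u).ncard ≤ Δ) →
      (∀ (u : U) (i : κ), u ∉ P i → ((G.neighborSet u ∩ P i).ncard : ℝ) ≤ γ * Δ) →
      (∀ i, (1 + ε) * Δ ≤ ((P i).ncard : ℝ)) →
      ∃ f : κ → U, (∀ i, f i ∈ P i) ∧ ∀ i j, i ≠ j → ¬ G.Adj (f i) (f j))
    (V : Type) [Finite V] (H : Fin n → SimpleGraph V)
    (hdeg : ∀ i v, ((H i).neighborSet v).ncard ≤ Δ)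
    (hn : (1 + ε) * Δ ≤ (n : ℝ)) :
    ∃ g : V → Fin n, ∀ v w : V, v ≠ w → g v = g w → ¬ (H (g v)).Adj v w := by
  have hpart (u : V × Fin n) : ∃! v, u ∈ Prod.fst ⁻¹' {v} := ⟨u.1, rfl, fun _ h => h.symm⟩
  have hdeg' (u : V × Fin n) : ((layerUnion H).neighborSet u).ncard ≤ Δ :=
    (ncard_neighborSet_layerUnion H u.1 u.2).trans_le (hdeg u.2 u.1)
  have hloc (u : V × Fin n) (v : V) (_ : u ∉ Prod.fst ⁻¹' {v}) :
      (((layerUnion H).neighborSet u ∩ Prod.fst ⁻¹' {v}).ncard : ℝ) ≤ γ * Δ :=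
    le_trans (by exact_mod_cast ncard_neighborSet_layerUnion_inter_fiber_le_one H u v) hγΔ
  have hsize (v : V) : (1 + ε) * Δ ≤ ((Prod.fst ⁻¹' {v} : Set (V × Fin n)).ncard : ℝ) := by
    rwa [Set.preimage_fst_singleton_eq_range,
      Set.ncard_range_of_injective (Prod.mk_right_injective v), Nat.card_fin]
  obtain ⟨f, hfP, hf⟩ := hyp (V × Fin n) V (layerUnion H) _ hpart hdeg' hloc hsize
  exact ⟨fun v => (f v).2, fun v w hvw => not_adj_of_layerUnion_transversal H hfP hf hvw⟩

/-- Application of the main theorem: if every multipartite graph with maximum degree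
at most Δ, local degree at most γΔ and parts of size at least (1+ε)Δ admits an
independent transversal, then for any n ≥ (1+ε)Δ graphs H_1,…,H_n on a common
vertex set V, each of maximum degree at most Δ, V can be partitioned as
V = I_1 ∪ … ∪ I_n with I_i independent in H_i (given via the index assignment g). -/
theorem stmt_9 (Δ n : ℕ) (ε γ : ℝ) (hε : 0 < ε) (hγ : 0 ≤ γ)
    (hγΔ : (1 : ℝ) ≤ γ * Δ)
    (hyp : ∀ (U κ : Type) [Finite U] (G : SimpleGraph U) (P : κ → Set U),
      (∀ u, ∃! i, u ∈ P i) →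
      (∀ u, (G.neighborSet u).ncard ≤ Δ) →
      (∀ (u : U) (i : κ), u ∉ P i → ((G.neighborSet u ∩ P i).ncard : ℝ) ≤ γ * Δ) →
      (∀ i, (1 + ε) * Δ ≤ ((P i).ncard : ℝ)) →
      ∃ f : κ → U, (∀ i, f i ∈ P i) ∧ ∀ i j, i ≠ j → ¬ G.Adj (f i) (f j))
    (V : Type) [Finite V] (H : Fin n → SimpleGraph V)
    (hdeg : ∀ i v, ((H i).neighborSet v).ncard ≤ Δ)
    (hn : (1 + ε) * Δ ≤ (n : ℝ)) :
    ∃ g : V → Fin n, ∀ v w : V, v ≠ w → g v = g w → ¬ (H (g v)).Adj v w :=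
  stmt_9_general Δ n ε γ hγΔ hyp V H hdeg hn
end

section
/- Define sequences by Δ_0 = Δ and Δ_{t+1} = Δ_t/2 + Δ_t^{2/3} (real-valued). Then for all t ≥ 0, Δ_t^{1/3} − 1/(2^{1/3} − 1) ≤ 2^{-t/3}·(Δ^{1/3} − 1/(2^{1/3} − 1)); in particular Δ_t^{1/3} ≤ Δ^{1/3}/2^{t/3} + 4. -/
/-!
Write `y_t = Δ_t^{1/3}`. Since `Δ_t/2 + Δ_t^{2/3} ≤ (y_t + 1)^3 / 2`, the cube roots satisfy
`y_{t+1} ≤ (y_t + 1) / 2^{1/3}`, an affine contraction whose fixed point is `1/(2^{1/3} - 1)`.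
Hence the excess of `y_t` over that fixed point shrinks by the factor `2^{-1/3}` at every step,
and the fixed point is at most `4` because `2^{1/3} > 5/4`.
-/

open Real

lemma sub_le_pow_mul_sub_of_sub_le_mul_sub {y : ℕ → ℝ} {r c : ℝ} (hr : 0 ≤ r)
    (hy : ∀ n, y (n + 1) - c ≤ r * (y n - c)) (n : ℕ) :
    y n - c ≤ r ^ n * (y 0 - c) := by
  induction n with
  | zero => simp
  | succ n ih => calc
      y (n + 1) - c ≤ r * (y n - c) := hy n
      _ ≤ r * (r ^ n * (y 0 - c)) := by gcongr
      _ = r ^ (n + 1) * (y 0 - c) := by ring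

lemma add_one_div_sub_one_div_sub_one {a : ℝ} (ha : a ≠ 0) (ha1 : a ≠ 1) (y : ℝ) :
    (y + 1) / a - 1 / (a - 1) = a⁻¹ * (y - 1 / (a - 1)) := by
  have : a - 1 ≠ 0 := sub_ne_zero.2 ha1
  field_simp
  ring

lemma rpow_one_third_half_add_rpow_two_thirds_le {x : ℝ} (hx : 0 ≤ x) :
    (x / 2 + x ^ ((2:ℝ) / 3)) ^ ((1:ℝ) / 3) ≤ (x ^ ((1:ℝ) / 3) + 1) / 2 ^ ((1:ℝ) / 3) := by
  set y := x ^ ((1:ℝ) / 3)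
  have hy : 0 ≤ y := rpow_nonneg hx _
  have hx3 : x = y ^ 3 := by rw [← rpow_natCast, ← rpow_mul hx]; norm_num
  have hx23 : x ^ ((2:ℝ) / 3) = y ^ 2 := by rw [← rpow_natCast, ← rpow_mul hx]; norm_num
  have hcube : x / 2 + x ^ ((2:ℝ) / 3) ≤ (y + 1) ^ 3 / 2 := by
    rw [hx23, hx3]; nlinarith
  calc _ ≤ ((y + 1) ^ 3 / 2) ^ ((1:ℝ) / 3) := by gcongr
    _ = (y + 1) / 2 ^ ((1:ℝ) / 3) := by
      rw [div_rpow (by positivity) zero_le_two, ← rpow_natCast, ← rpow_mul (by positivity)]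
      norm_num

lemma one_div_two_rpow_one_third_sub_one_le_four : 1 / ((2:ℝ) ^ ((1:ℝ) / 3) - 1) ≤ 4 := by
  set a : ℝ := 2 ^ ((1:ℝ) / 3)
  have ha3 : a ^ 3 = 2 := by rw [← rpow_natCast, ← rpow_mul zero_le_two]; norm_num
  have ha : 5 / 4 < a := by
    by_contra! hle
    have : a ^ 3 ≤ (5 / 4) ^ 3 := pow_le_pow_left₀ (rpow_nonneg zero_le_two _) hle 3
    norm_num [ha3] at this
  rw [div_le_iff₀ (by linarith)]
  linarith

lemma inv_two_rpow_one_third_pow (n : ℕ) :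
    ((2:ℝ) ^ ((1:ℝ) / 3))⁻¹ ^ n = 2 ^ (-(n:ℝ) / 3) := by
  rw [← rpow_neg zero_le_two, ← rpow_natCast, ← rpow_mul zero_le_two]
  ring_nf

/-- For the recursion Δ_0 = Δ, Δ_{t+1} = Δ_t/2 + Δ_t^{2/3} (real-valued), one has
Δ_t^{1/3} − 1/(2^{1/3} − 1) ≤ 2^{−t/3}(Δ^{1/3} − 1/(2^{1/3} − 1)) for all t ≥ 0;
in particular Δ_t^{1/3} ≤ Δ^{1/3}/2^{t/3} + 4. -/
theorem stmt_10 (Δ : ℝ) (hΔ : 0 < Δ) (f : ℕ → ℝ)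
    (h0 : f 0 = Δ)
    (hrec : ∀ t, f (t + 1) = f t / 2 + f t ^ ((2 : ℝ) / 3)) :
    ∀ t : ℕ,
      f t ^ ((1 : ℝ) / 3) - 1 / ((2 : ℝ) ^ ((1 : ℝ) / 3) - 1) ≤
        (2 : ℝ) ^ (-(t : ℝ) / 3) * (Δ ^ ((1 : ℝ) / 3) - 1 / ((2 : ℝ) ^ ((1 : ℝ) / 3) - 1)) ∧
      f t ^ ((1 : ℝ) / 3) ≤ Δ ^ ((1 : ℝ) / 3) / (2 : ℝ) ^ ((t : ℝ) / 3) + 4 := by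
  set a : ℝ := 2 ^ ((1:ℝ) / 3)
  have ha : 1 < a := one_lt_rpow one_lt_two (by norm_num)
  have hf : ∀ t, 0 ≤ f t := by
    intro t
    induction t with
    | zero => exact h0 ▸ hΔ.le
    | succ n ih => rw [hrec n]; positivity
  have hcontr : ∀ t : ℕ, f t ^ ((1:ℝ) / 3) - 1 / (a - 1) ≤
      a⁻¹ ^ t * (Δ ^ ((1:ℝ) / 3) - 1 / (a - 1)) := by
    refine h0 ▸ sub_le_pow_mul_sub_of_sub_le_mul_sub (by positivity) fun n => ?_
    rw [hrec n, ← add_one_div_sub_one_div_sub_one (by positivity) ha.ne']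
    gcongr
    exact rpow_one_third_half_add_rpow_two_thirds_le (hf n)
  intro t
  rw [← inv_two_rpow_one_third_pow]
  refine ⟨hcontr t, ?_⟩
  have hc : 0 ≤ 1 / (a - 1) := one_div_nonneg.2 (sub_nonneg.2 ha.le)
  have hr : 0 ≤ a⁻¹ ^ t := by positivity
  calc f t ^ ((1:ℝ) / 3) ≤ a⁻¹ ^ t * (Δ ^ ((1:ℝ) / 3) - 1 / (a - 1)) + 1 / (a - 1) := by
        linarith [hcontr t]
    _ ≤ a⁻¹ ^ t * Δ ^ ((1:ℝ) / 3) + 4 := by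
        linarith [mul_nonneg hr hc, one_div_two_rpow_one_third_sub_one_le_four]
    _ = Δ ^ ((1:ℝ) / 3) / 2 ^ ((t:ℝ) / 3) + 4 := by
        rw [inv_two_rpow_one_third_pow, neg_div, rpow_neg zero_le_two, ← div_eq_inv_mul]
end

section
/- Let G be a multipartite graph with maximum degree at most Δ, parts V_1,...,V_r each of size exactly 2s, and local degree at most d, where Δ is sufficiently large and d > (log Δ)^4. Then there exist subsets U_i ⊆ V_i, each of size exactly s, such that the subgraph of G induced by ∪U_i has maximum degree at most Δ/2 + Δ^{2/3} and local degree at most d/2 + d^{2/3}. -/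
/-!
Pair up the `2s` vertices of every part arbitrarily and keep one vertex of each pair, chosen by
an independent fair coin. A vertex `v` keeps half of its neighbours in expectation, and the
deviation is a sum of independent `±1/2` terms, one for each pair meeting `N(v)` in exactly one
vertex. Hoeffding's bound makes a deviation of `Δ^{2/3}` (or of `d^{2/3}` inside one part)
occur with probability at most `exp(-2Δ^{1/3})` (or `exp(-2d^{1/3})`), which is at most
`Δ^{-8}` because `d > (log Δ)^4`. Each bad event is determined by the at most `Δ` coins of
the pairs meeting the neighbourhood involved, and shares a coin with at most `4Δ²` other bad
events, so the symmetric Lovász Local Lemma provides coins avoiding all of them.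
-/

open Finset Real Filter

section LocalLemma

variable {K α : Type*} [Fintype K] [DecidableEq K] [Fintype α]

theorem nonneg_of_card_le_mul_card [Nonempty α] {E : Finset (K → α)} {p : ℝ}
    (h : (#E : ℝ) ≤ p * Fintype.card (K → α)) : 0 ≤ p :=
  nonneg_of_mul_nonneg_left ((Nat.cast_nonneg _).trans h) (by exact_mod_cast Fintype.card_pos)

variable [DecidableEq α]

theorem card_inter_mul_card_eq_of_dependsOn {X Y : Finset K} {E F : Finset (K → α)}
    (hE : DependsOn (· ∈ E) (X : Set K)) (hF : DependsOn (· ∈ F) (Y : Set K))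
    (hXY : Disjoint X Y) :
    #(E ∩ F) * Fintype.card (K → α) = #E * #F := by
  have agree_left (ω ω' : K → α) : ∀ k ∈ (X : Set K), X.piecewise ω ω' k = ω k :=
    fun k hk => piecewise_eq_of_mem _ _ _ hk
  have agree_right (ω ω' : K → α) : ∀ k ∈ (Y : Set K), X.piecewise ω ω' k = ω' k :=
    fun k hk => piecewise_eq_of_notMem _ _ _ (disjoint_right.mp hXY hk)
  -- exchanging the `X`-coordinates of two configurations maps `(E ∩ F) × (K → α)` onto `E × F`
  let swap (q : (K → α) × (K → α)) := (X.piecewise q.1 q.2, X.piecewise q.2 q.1)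
  have swap_swap (q) : swap (swap q) = q := by
    ext k <;> by_cases hk : k ∈ X <;> simp [swap, hk]
  rw [← card_univ, ← card_product, ← card_product]
  refine card_nbij' swap swap ?_ ?_ (fun q _ => swap_swap q) (fun q _ => swap_swap q)
  · rintro ⟨ω, ω'⟩ h
    simp only [coe_product, coe_inter, Set.mem_prod, Set.mem_inter_iff, mem_coe] at h ⊢
    exact ⟨(hE (agree_left ω ω')).mpr h.1.1, (hF (agree_right ω' ω)).mpr h.1.2⟩
  · rintro ⟨ω, ω'⟩ h
    simp only [coe_product, coe_inter, Set.mem_prod, Set.mem_inter_iff, mem_coe] at h ⊢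
    exact ⟨⟨(hE (agree_left ω ω')).mpr h.1, (hF (agree_right ω ω')).mpr h.2⟩, mem_univ _⟩

variable {J : Type*} [Fintype J] [DecidableEq J] (Ev : J → Finset (K → α))

def avoiding (S : Finset J) : Finset (K → α) := {ω | ∀ j ∈ S, ω ∉ Ev j}

@[simp]
theorem mem_avoiding {S : Finset J} {ω : K → α} : ω ∈ avoiding Ev S ↔ ∀ j ∈ S, ω ∉ Ev j := by
  simp [avoiding]

theorem avoiding_anti {S T : Finset J} (h : S ⊆ T) : avoiding Ev T ⊆ avoiding Ev S :=
  fun _ hω => (mem_avoiding Ev).mpr fun j hj => (mem_avoiding Ev).mp hω j (h hj)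

theorem avoiding_insert (a : J) (S : Finset J) :
    avoiding Ev (insert a S) = avoiding Ev S \ Ev a := by
  ext ω
  simp only [Finset.mem_sdiff, mem_avoiding, forall_mem_insert]
  tauto

theorem dependsOn_mem_avoiding (vbl : J → Finset K)
    (hdep : ∀ j, DependsOn (· ∈ Ev j) (vbl j : Set K)) (S : Finset J) :
    DependsOn (· ∈ avoiding Ev S) (S.biUnion vbl : Set K) := by
  intro ω ω' h
  simp only [mem_avoiding, eq_iff_iff]
  refine forall₂_congr fun j hj => not_congr (hdep j fun k hk => h k ?_).to_iff
  exact mem_biUnion.mpr ⟨j, hj, hk⟩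

theorem card_avoiding_le_add_sum (S T : Finset J) :
    (#(avoiding Ev S) : ℝ) ≤ #(avoiding Ev T) + ∑ j ∈ T \ S, (#(Ev j ∩ avoiding Ev S) : ℝ) := by
  have hsub : avoiding Ev S \ avoiding Ev T ⊆ (T \ S).biUnion fun j => Ev j ∩ avoiding Ev S := by
    intro ω hω
    simp only [Finset.mem_sdiff, mem_avoiding, not_forall, not_not] at hω
    obtain ⟨hS, j, hjT, hj⟩ := hω
    exact mem_biUnion.mpr ⟨j, mem_sdiff.mpr ⟨hjT, fun hjS => hS j hjS hj⟩,
      mem_inter.mpr ⟨hj, (mem_avoiding Ev).mpr hS⟩⟩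
  have := (card_le_card hsub).trans card_biUnion_le
  have := card_le_card_sdiff_add_card (s := avoiding Ev S) (t := avoiding Ev T)
  exact_mod_cast (by omega)

variable {Ev} {vbl : J → Finset K} {p : ℝ} {m : ℕ}

theorem card_inter_avoiding_le_of_disjoint [Nonempty α]
    (hdep : ∀ j, DependsOn (· ∈ Ev j) (vbl j : Set K))
    (hprob : ∀ j, (#(Ev j) : ℝ) ≤ p * Fintype.card (K → α)) {a : J} {T : Finset J}
    (hT : ∀ b ∈ T, Disjoint (vbl a) (vbl b)) :
    (#(Ev a ∩ avoiding Ev T) : ℝ) ≤ p * #(avoiding Ev T) := by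
  have h := card_inter_mul_card_eq_of_dependsOn (hdep a) (dependsOn_mem_avoiding Ev vbl hdep T)
    ((disjoint_biUnion_right _ _ _).mpr hT)
  rw [← mul_le_mul_iff_of_pos_right (Nat.cast_pos.mpr (Fintype.card_pos (α := K → α)))]
  calc (#(Ev a ∩ avoiding Ev T) : ℝ) * Fintype.card (K → α) = #(Ev a) * #(avoiding Ev T) := by
        exact_mod_cast h
    _ ≤ p * Fintype.card (K → α) * #(avoiding Ev T) := by gcongr; exact hprob a
    _ = p * #(avoiding Ev T) * Fintype.card (K → α) := by ring

theorem card_inter_avoiding_le [Nonempty α]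
    (hdep : ∀ j, DependsOn (· ∈ Ev j) (vbl j : Set K))
    (hprob : ∀ j, (#(Ev j) : ℝ) ≤ p * Fintype.card (K → α))
    (hdeg : ∀ j, #{j' | ¬Disjoint (vbl j) (vbl j')} ≤ m) (hpm : 4 * p * m ≤ 1)
    (S : Finset J) (a : J) : (#(Ev a ∩ avoiding Ev S) : ℝ) ≤ 2 * p * #(avoiding Ev S) := by
  induction S using Finset.strongInduction generalizing a with | H S ih =>
  have hp := nonneg_of_card_le_mul_card (hprob a)
  set T := S.filter fun b => Disjoint (vbl a) (vbl b)
  have hTS : T ⊆ S := filter_subset _ S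
  -- conditioning on avoiding the events of `S \ T` costs at most a factor 2
  have half : (#(avoiding Ev T) : ℝ) ≤ 2 * #(avoiding Ev S) := by
    rcases hTS.eq_or_ssubset with hTS | hTS
    · rw [← hTS]; linarith [(Nat.cast_nonneg #(avoiding Ev S) : (0 : ℝ) ≤ _)]
    have hcard : (#(S \ T) : ℝ) ≤ m := by
      refine Nat.cast_le.mpr ((card_le_card fun b hb => ?_).trans (hdeg a))
      obtain ⟨hbS, hbT⟩ := mem_sdiff.mp hb
      exact mem_filter.mpr ⟨mem_univ _, fun h => hbT (mem_filter.mpr ⟨hbS, h⟩)⟩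
    have hsum : ∑ b ∈ S \ T, (#(Ev b ∩ avoiding Ev T) : ℝ)
        ≤ #(S \ T) * (2 * p * #(avoiding Ev T)) := by
      rw [← nsmul_eq_mul, ← sum_const]
      exact sum_le_sum fun b _ => ih T hTS b
    have hhalf : (#(S \ T) : ℝ) * (2 * p * #(avoiding Ev T)) ≤ #(avoiding Ev T) / 2 :=
      calc (#(S \ T) : ℝ) * (2 * p * #(avoiding Ev T)) ≤ m * (2 * p * #(avoiding Ev T)) := by
            gcongr
        _ ≤ #(avoiding Ev T) / 2 := by nlinarith [(Nat.cast_nonneg #(avoiding Ev T) : (0 : ℝ) ≤ _)]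
    linarith [card_avoiding_le_add_sum Ev T S]
  calc (#(Ev a ∩ avoiding Ev S) : ℝ) ≤ #(Ev a ∩ avoiding Ev T) := by
        gcongr; exact avoiding_anti Ev hTS
    _ ≤ p * #(avoiding Ev T) :=
        card_inter_avoiding_le_of_disjoint hdep hprob fun b hb => (mem_filter.mp hb).2
    _ ≤ 2 * p * #(avoiding Ev S) := by nlinarith

theorem lovasz_local_lemma [Nonempty α]
    (hdep : ∀ j, DependsOn (· ∈ Ev j) (vbl j : Set K))
    (hprob : ∀ j, (#(Ev j) : ℝ) ≤ p * Fintype.card (K → α))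
    (hdeg : ∀ j, #{j' | ¬Disjoint (vbl j) (vbl j')} ≤ m) (hm : 0 < m) (hpm : 4 * p * m ≤ 1) :
    ∃ ω : K → α, ∀ j, ω ∉ Ev j := by
  suffices hpos : ∀ S, 0 < #(avoiding Ev S) by
    obtain ⟨ω, hω⟩ := card_pos.mp (hpos univ)
    exact ⟨ω, fun j => (mem_avoiding Ev).mp hω j (mem_univ j)⟩
  intro S
  induction S using Finset.induction_on with
  | empty => exact card_pos.mpr ⟨fun _ => Classical.arbitrary α, by simp⟩
  | insert a S _ ih =>
    have hp4 : 4 * p ≤ 1 := le_trans (le_mul_of_one_le_right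
      (by linarith [nonneg_of_card_le_mul_card (hprob a)]) (by exact_mod_cast hm)) hpm
    have hsplit : (#(avoiding Ev S \ Ev a) : ℝ) + #(Ev a ∩ avoiding Ev S) = #(avoiding Ev S) := by
      rw [inter_comm]; exact_mod_cast card_sdiff_add_card_inter _ _
    rw [avoiding_insert, ← Nat.cast_pos (α := ℝ)]
    nlinarith [card_inter_avoiding_le hdep hprob hdeg hpm S a, (Nat.cast_pos.mpr ih : (0 : ℝ) < _)]

end LocalLemma

theorem card_filter_mean_add_lt_sum_le {K : Type*} [Fintype K] [DecidableEq K] (c : K → Bool → ℝ)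
    {a σ : ℝ} (ha : 0 ≤ a) (hσ : 0 < σ) (hc : ∑ k, (c k true - c k false) ^ 2 ≤ σ) :
    (#{ω : K → Bool | ∑ k, (c k true + c k false) / 2 + a < ∑ k, c k (ω k)} : ℝ)
      ≤ exp (-(2 * a ^ 2 / σ)) * 2 ^ Fintype.card K := by
  set T := ({ω : K → Bool | ∑ k, (c k true + c k false) / 2 + a < ∑ k, c k (ω k)} : Finset _)
  -- exponential moment with the optimal parameter `t = 4a/σ`
  set t := 4 * a / σ with ht
  have ht0 : 0 ≤ t := by positivity
  let g (k : K) (b : Bool) : ℝ := exp (t * (c k b - (c k true + c k false) / 2))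
  have markov : ∀ ω ∈ T, exp (t * a) ≤ ∏ k, g k (ω k) := by
    intro ω hω
    rw [← exp_sum, ← mul_sum, sum_sub_distrib]
    gcongr
    linarith [(mem_filter.mp hω).2]
  have factor (k : K) :
      g k true + g k false ≤ 2 * exp (t ^ 2 / 8 * (c k true - c k false) ^ 2) := by
    set x := t * (c k true - c k false) / 2
    calc g k true + g k false = 2 * ((exp x + exp (-x)) / 2) := by simp only [g, x]; ring_nf
      _ ≤ 2 * exp (x ^ 2 / 2) := by rw [← cosh_eq]; gcongr; exact cosh_le_exp_half_sq x
      _ = 2 * exp (t ^ 2 / 8 * (c k true - c k false) ^ 2) := by simp only [x]; ring_nf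
  calc (#T : ℝ) = exp (-(t * a)) * ∑ ω ∈ T, exp (t * a) := by
        rw [sum_const, nsmul_eq_mul, mul_left_comm, ← exp_add, neg_add_cancel, exp_zero, mul_one]
    _ ≤ exp (-(t * a)) * ∑ ω : K → Bool, ∏ k, g k (ω k) := by
        gcongr
        exact (sum_le_sum markov).trans
          (sum_le_sum_of_subset_of_nonneg (subset_univ T) fun _ _ _ => by positivity)
    _ = exp (-(t * a)) * ∏ k, (g k true + g k false) := by
        simp only [← Fintype.prod_sum, Fintype.sum_bool]
    _ ≤ exp (-(t * a)) * ∏ k, 2 * exp (t ^ 2 / 8 * (c k true - c k false) ^ 2) := by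
        gcongr with k
        exact factor k
    _ = exp (-(t * a) + t ^ 2 / 8 * ∑ k, (c k true - c k false) ^ 2) * 2 ^ Fintype.card K := by
        rw [prod_mul_distrib, prod_const, card_univ, ← exp_sum, ← mul_sum, exp_add]; ring
    _ ≤ exp (-(t * a) + t ^ 2 / 8 * σ) * 2 ^ Fintype.card K := by gcongr
    _ = exp (-(2 * a ^ 2 / σ)) * 2 ^ Fintype.card K := by
        rw [ht]; congr 2; field_simp; ring

section Selection

variable {V K : Type*} (Φ : V ≃ K × Bool)

def pairsMeeting [DecidableEq K] (N : Finset V) : Finset K := N.image fun v => (Φ v).1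

theorem mem_pairsMeeting [DecidableEq K] {N : Finset V} {k : K} :
    k ∈ pairsMeeting Φ N ↔ ∃ b, Φ.symm (k, b) ∈ N := by
  simp only [pairsMeeting, mem_image]
  constructor
  · rintro ⟨v, hv, rfl⟩
    exact ⟨(Φ v).2, by simpa using hv⟩
  · rintro ⟨b, hb⟩
    exact ⟨_, hb, by simp⟩

variable [Fintype K]

def selection (ω : K → Bool) : Finset V :=
  univ.map ⟨fun k => Φ.symm (k, ω k), fun _ _ h => congrArg Prod.fst (Φ.symm.injective h)⟩

theorem card_filter_selection (p : K → Prop) [DecidablePred p] (ω : K → Bool) :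
    #{v ∈ selection Φ ω | p (Φ v).1} = #{k | p k} := by
  rw [selection, filter_map, card_map]
  refine congrArg card (filter_congr fun k _ => ?_)
  show p (Φ (Φ.symm (k, ω k))).1 ↔ p k
  rw [Equiv.apply_symm_apply]

variable [DecidableEq V]

theorem card_inter_selection (N : Finset V) (ω : K → Bool) :
    #(N ∩ selection Φ ω) = #{k | Φ.symm (k, ω k) ∈ N} := by
  rw [inter_comm, ← filter_mem_eq_inter, selection, filter_map, card_map]
  rfl

theorem card_eq_sum_sum_indicator (N : Finset V) :
    (#N : ℝ) = ∑ k, ∑ b, if Φ.symm (k, b) ∈ N then 1 else 0 := by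
  have : N.map Φ.toEmbedding = ({x | Φ.symm x ∈ N} : Finset (K × Bool)) := by
    ext x; simp
  rw [← card_map Φ.toEmbedding, this, card_filter, ← Fintype.sum_prod_type']
  push_cast
  rfl

theorem dependsOn_card_inter_selection [DecidableEq K] (N : Finset V) :
    DependsOn (fun ω => #(N ∩ selection Φ ω)) (pairsMeeting Φ N : Set K) := by
  intro ω ω' h
  simp only [card_inter_selection]
  refine congrArg card (filter_congr fun k _ => ?_)
  by_cases hk : k ∈ pairsMeeting Φ N
  · rw [h k hk]
  · simp only [mem_pairsMeeting, not_exists] at hk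
    simp only [hk]

theorem card_filter_lt_card_inter_selection_le [DecidableEq K] (N : Finset V) {D a : ℝ}
    (hN : #N ≤ D) (hD : 0 < D) (ha : 0 ≤ a) :
    (#{ω : K → Bool | D / 2 + a < #(N ∩ selection Φ ω)} : ℝ)
      ≤ exp (-(2 * a ^ 2 / D)) * 2 ^ Fintype.card K := by
  let c (k : K) (b : Bool) : ℝ := if Φ.symm (k, b) ∈ N then 1 else 0
  have hsel (ω : K → Bool) : (#(N ∩ selection Φ ω) : ℝ) = ∑ k, c k (ω k) := by
    rw [card_inter_selection, card_filter]
    push_cast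
    rfl
  have hN' : ∑ k, (c k true + c k false) = #N := by
    rw [card_eq_sum_sum_indicator Φ]
    simp only [Fintype.sum_bool, c]
  have hvar : ∑ k, (c k true - c k false) ^ 2 ≤ D := by
    refine le_trans (sum_le_sum fun k _ => ?_) (hN'.trans_le hN)
    simp only [c]
    split_ifs <;> norm_num
  refine le_trans (Nat.cast_le.mpr (card_le_card fun ω => ?_))
    (card_filter_mean_add_lt_sum_le c ha hD hvar)
  simp only [mem_filter, mem_univ, true_and, ← hsel, ← sum_div, hN']
  intro h
  linarith

theorem exists_selection_forall_card_inter_le [DecidableEq K] {J : Type*} [Fintype J]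
    [DecidableEq J] (N : J → Finset V) (D a : J → ℝ) {p : ℝ} {m : ℕ}
    (hN : ∀ j, #(N j) ≤ D j) (hD : ∀ j, 0 < D j) (ha : ∀ j, 0 ≤ a j)
    (hp : ∀ j, exp (-(2 * a j ^ 2 / D j)) ≤ p)
    (hdeg : ∀ j, #{j' | ¬Disjoint (pairsMeeting Φ (N j)) (pairsMeeting Φ (N j'))} ≤ m)
    (hm : 0 < m) (hpm : 4 * p * m ≤ 1) :
    ∃ ω, ∀ j, #(N j ∩ selection Φ ω) ≤ D j / 2 + a j := by
  obtain ⟨ω, hω⟩ := lovasz_local_lemma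
    (Ev := fun j => {ω | D j / 2 + a j < #(N j ∩ selection Φ ω)})
    (vbl := fun j => pairsMeeting Φ (N j)) (fun j ω ω' h => by
      simp only [mem_filter, mem_univ, true_and, dependsOn_card_inter_selection Φ (N j) h])
    (fun j => (card_filter_lt_card_inter_selection_le Φ (N j) (hN j) (hD j) (ha j)).trans (by
      rw [Fintype.card_fun, Fintype.card_bool]; push_cast; gcongr; exact hp j))
    hdeg hm hpm
  exact ⟨ω, fun j => not_lt.mp fun h => hω j (mem_filter.mpr ⟨mem_univ _, h⟩)⟩

end Selection

theorem card_filter_not_disjoint_le {J K : Type*} [Fintype J] [DecidableEq J] [DecidableEq K]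
    (S : J → Finset K) {a b : ℕ} (hS : ∀ j, #(S j) ≤ a) (hK : ∀ k, #{j | k ∈ S j} ≤ b) (j : J) :
    #{j' | ¬Disjoint (S j) (S j')} ≤ a * b :=
  calc #{j' | ¬Disjoint (S j) (S j')}
      ≤ #((S j).biUnion fun k => {j' | k ∈ S j'}) := card_le_card fun j' hj' => by
        obtain ⟨k, hk, hk'⟩ := not_disjoint_iff.mp (mem_filter.mp hj').2
        exact mem_biUnion.mpr ⟨k, hk, mem_filter.mpr ⟨mem_univ _, hk'⟩⟩
    _ ≤ ∑ k ∈ S j, #{j' | k ∈ S j'} := card_biUnion_le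
    _ ≤ #(S j) * b := by rw [← smul_eq_mul, ← sum_const]; exact sum_le_sum fun k _ => hK k
    _ ≤ a * b := Nat.mul_le_mul_right _ (hS j)

theorem rpow_two_thirds_sq_div {x : ℝ} (hx : 0 < x) :
    (x ^ (2 / 3 : ℝ)) ^ 2 / x = x ^ (1 / 3 : ℝ) := by
  rw [← rpow_natCast, ← rpow_mul hx.le, div_eq_iff hx.ne', ← rpow_add_one hx.ne']
  norm_num

theorem four_mul_le_rpow_one_third {x y : ℝ} (hy : 64 ≤ y) (hx : y ^ 4 ≤ x) :
    4 * y ≤ x ^ (1 / 3 : ℝ) := by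
  have h : (4 * y) ^ (3 : ℕ) ≤ x := by nlinarith [pow_le_pow_left₀ (by norm_num) hy 3]
  calc 4 * y = ((4 * y) ^ (3 : ℕ)) ^ (1 / 3 : ℝ) := by
        rw [← rpow_natCast, ← rpow_mul (by positivity)]; norm_num
    _ ≤ x ^ (1 / 3 : ℝ) := by gcongr

theorem eventually_le_log_and_log_pow_four_le :
    ∀ᶠ Δ : ℕ in atTop, 64 ≤ log Δ ∧ log Δ ^ 4 ≤ Δ := by
  have h : ∀ᶠ x : ℝ in atTop, 64 ≤ log x ∧ log x ^ 4 ≤ x := by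
    filter_upwards [tendsto_log_atTop.eventually_ge_atTop 64,
      (isLittleO_pow_log_id_atTop (n := 4)).bound one_pos, eventually_ge_atTop 0]
      with x h64 hx hx0
    refine ⟨h64, ?_⟩
    simpa [abs_of_nonneg hx0, Even.pow_abs (by decide : Even 4)] using hx
  exact tendsto_natCast_atTop_atTop.eventually h

section Graph

variable {V K ι : Type*} [Fintype V] [DecidableEq ι]
  (G : SimpleGraph V) [DecidableRel G.Adj] (part : V → ι)

/-- The index `inr (v, i)` with `part v = i` gets the empty set: local degrees only count
neighbours outside the part of `v`. -/
def halvingTestSet : V ⊕ V × ι → Finset V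
  | .inl v => G.neighborFinset v
  | .inr (v, i) => if part v = i then ∅ else {u ∈ G.neighborFinset v | part u = i}

theorem halvingTestSet_subset (x : V ⊕ V × ι) :
    halvingTestSet G part x ⊆ G.neighborFinset (Sum.elim id Prod.fst x) := by
  rcases x with v | ⟨v, i⟩
  · exact Subset.rfl
  · simp only [halvingTestSet]
    split_ifs
    exacts [empty_subset _, filter_subset _ _]

theorem card_filter_mem_pairsMeeting_halvingTestSet_le [DecidableEq V] [Fintype ι] [DecidableEq K]
    (Φ : V ≃ K × Bool) {Δ : ℕ} (hdeg : ∀ v, G.degree v ≤ Δ) (k : K) :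
    #{x | k ∈ pairsMeeting Φ (halvingTestSet G part x)} ≤ 4 * Δ := by
  let nbrs (b : Bool) := G.neighborFinset (Φ.symm (k, b))
  calc #{x | k ∈ pairsMeeting Φ (halvingTestSet G part x)}
      ≤ #(univ.biUnion fun b => (nbrs b).map .inl ∪
          (nbrs b).image fun v => .inr (v, part (Φ.symm (k, b)))) := by
        refine card_le_card fun x hx => ?_
        obtain ⟨b, hb⟩ := (mem_pairsMeeting Φ).mp (mem_filter.mp hx).2
        refine mem_biUnion.mpr ⟨b, mem_univ b, ?_⟩
        rcases x with v | ⟨v, i⟩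
        · rw [halvingTestSet, SimpleGraph.mem_neighborFinset] at hb
          exact mem_union_left _ (mem_map_of_mem _ ((G.mem_neighborFinset _ _).mpr hb.symm))
        · simp only [halvingTestSet] at hb
          split_ifs at hb
          · simp at hb
          obtain ⟨hadj, rfl⟩ := mem_filter.mp hb
          exact mem_union_right _ (mem_image_of_mem _
            ((G.mem_neighborFinset _ _).mpr ((G.mem_neighborFinset _ _).mp hadj).symm))
    _ ≤ ∑ b, (#(nbrs b) + #(nbrs b)) := card_biUnion_le.trans (sum_le_sum fun b _ =>
        (card_union_le _ _).trans (add_le_add (card_map _).le card_image_le))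
    _ ≤ 4 * Δ := by
        simp only [Fintype.sum_bool, nbrs, SimpleGraph.card_neighborFinset_eq_degree]
        linarith [hdeg (Φ.symm (k, true)), hdeg (Φ.symm (k, false))]

theorem exists_selection_degree_le [DecidableEq V] [Fintype ι] [Fintype K] [DecidableEq K]
    (Φ : V ≃ K × Bool) {Δ : ℕ} {d : ℝ} (hlog : 64 ≤ log Δ) (hΔ : log Δ ^ 4 ≤ Δ)
    (hd : log Δ ^ 4 ≤ d) (hdeg : ∀ v, G.degree v ≤ Δ)
    (hloc : ∀ v i, part v ≠ i → #{u ∈ G.neighborFinset v | part u = i} ≤ d) :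
    ∃ ω, (∀ v, #(G.neighborFinset v ∩ selection Φ ω) ≤ (Δ : ℝ) / 2 + (Δ : ℝ) ^ (2 / 3 : ℝ)) ∧
      ∀ v i, part v ≠ i →
        #({u ∈ G.neighborFinset v | part u = i} ∩ selection Φ ω) ≤ d / 2 + d ^ (2 / 3 : ℝ) := by
  let D : V ⊕ V × ι → ℝ := Sum.elim (fun _ => Δ) (fun _ => d)
  have hD (x) : log Δ ^ 4 ≤ D x := by rcases x with _ | _; exacts [hΔ, hd]
  have hD0 (x) : 0 < D x := lt_of_lt_of_le (by positivity) (hD x)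
  have hN (x) : #(halvingTestSet G part x) ≤ D x := by
    rcases x with v | ⟨v, i⟩
    · show (#(G.neighborFinset v) : ℝ) ≤ Δ
      exact_mod_cast (G.card_neighborFinset_eq_degree v).trans_le (hdeg v)
    · by_cases hi : part v = i
      · simpa [halvingTestSet, hi, D] using (hD0 (.inr (v, i))).le
      · simpa [halvingTestSet, hi, D] using hloc v i hi
  have hpairs (x) : #(pairsMeeting Φ (halvingTestSet G part x)) ≤ Δ :=
    card_image_le.trans ((card_le_card (halvingTestSet_subset G part x)).trans
      ((G.card_neighborFinset_eq_degree _).trans_le (hdeg _)))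
  have hΔ2 : (2 : ℝ) ≤ Δ := le_trans (by nlinarith [pow_le_pow_left₀ (by norm_num) hlog 4]) hΔ
  have hΔ0 : 0 < Δ := by exact_mod_cast (by linarith : (0 : ℝ) < Δ)
  have hpm : 4 * exp (-(8 * log Δ)) * ((Δ * (4 * Δ) : ℕ) : ℝ) ≤ 1 := by
    have h8 : exp (8 * log Δ) = (Δ : ℝ) ^ 8 := by
      rw [show (8 : ℝ) = (8 : ℕ) by norm_num, exp_nat_mul, exp_log (by positivity)]
    calc 4 * exp (-(8 * log Δ)) * ((Δ * (4 * Δ) : ℕ) : ℝ) = 16 * (Δ : ℝ) ^ 2 / (Δ : ℝ) ^ 8 := by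
          rw [exp_neg, h8]; push_cast; ring
      _ ≤ 1 := (div_le_one (by positivity)).mpr
          (by nlinarith [pow_le_pow_left₀ (by norm_num) hΔ2 6, sq_nonneg (Δ : ℝ)])
  obtain ⟨ω, hω⟩ := exists_selection_forall_card_inter_le Φ (halvingTestSet G part) D
    (fun x => D x ^ (2 / 3 : ℝ)) hN hD0 (fun x => (rpow_pos_of_pos (hD0 x) _).le)
    (fun x => by
      rw [mul_div_assoc, rpow_two_thirds_sq_div (hD0 x)]
      exact exp_le_exp.mpr (by linarith [four_mul_le_rpow_one_third hlog (hD x)]))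
    (card_filter_not_disjoint_le _ hpairs
      (card_filter_mem_pairsMeeting_halvingTestSet_le G part Φ hdeg))
    (by positivity) hpm
  refine ⟨ω, fun v => hω (.inl v), fun v i hi => ?_⟩
  simpa [halvingTestSet, hi, D] using hω (.inr (v, i))

end Graph

theorem exists_equiv_prod_fst_eq {V ι β : Type*} [Finite V] [Finite β] (f : V → ι)
    (h : ∀ i, Nat.card {v // f v = i} = Nat.card β) : ∃ Φ : V ≃ ι × β, ∀ v, (Φ v).1 = f v := by
  let e (i : ι) : {v // f v = i} ≃ β := (Finite.card_eq.mp (h i)).some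
  exact ⟨(Equiv.sigmaFiberEquiv f).symm.trans
    ((Equiv.sigmaCongrRight e).trans (Equiv.sigmaEquivProd ι β)), fun v => by simp⟩

theorem exists_equiv_prod_bool_of_ncard_eq {V ι : Type*} [Finite V] {P : ι → Set V} {s : ℕ}
    (hP : ∀ v, ∃! i, v ∈ P i) (hcard : ∀ i, (P i).ncard = 2 * s) :
    ∃ Φ : V ≃ (ι × Fin s) × Bool, ∀ v i, v ∈ P i ↔ (Φ v).1.1 = i := by
  choose part hpart using hP
  have hmem (v : V) (i : ι) : v ∈ P i ↔ part v = i :=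
    ⟨fun h => ((hpart v).2 i h).symm, fun h => h ▸ (hpart v).1⟩
  obtain ⟨Φ, hΦ⟩ := exists_equiv_prod_fst_eq part (β := Fin s × Bool) fun i => by
    rw [← Nat.card_congr (Equiv.subtypeEquivRight fun v => hmem v i), Nat.card_coe_set_eq,
      hcard i, Nat.card_prod, Nat.card_eq_fintype_card, Nat.card_eq_fintype_card,
      Fintype.card_fin, Fintype.card_bool, mul_comm]
  exact ⟨Φ.trans (Equiv.prodAssoc ι (Fin s) Bool).symm, fun v i => (hmem v i).trans (by simp [hΦ])⟩

theorem SimpleGraph.ncard_neighborSet_inter_coe {V : Type*} [DecidableEq V] (G : SimpleGraph V)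
    (v : V) [Fintype (G.neighborSet v)] (S : Finset V) :
    (G.neighborSet v ∩ S).ncard = #(G.neighborFinset v ∩ S) := by
  rw [← coe_neighborFinset, ← coe_inter, Set.ncard_coe_finset]

theorem SimpleGraph.ncard_neighborSet {V : Type*} (G : SimpleGraph V) (v : V)
    [Fintype (G.neighborSet v)] : (G.neighborSet v).ncard = G.degree v := by
  rw [← coe_neighborFinset, Set.ncard_coe_finset, card_neighborFinset_eq_degree]

theorem exists_halving_of_equiv {V ι : Type*} [Finite V] [Finite ι] (G : SimpleGraph V)
    {P : ι → Set V} {s Δ : ℕ} {d : ℝ} (Φ : V ≃ (ι × Fin s) × Bool)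
    (hP : ∀ v i, v ∈ P i ↔ (Φ v).1.1 = i) (hlog : 64 ≤ log Δ) (hΔ : log Δ ^ 4 ≤ Δ)
    (hd : log Δ ^ 4 ≤ d) (hdeg : ∀ v, (G.neighborSet v).ncard ≤ Δ)
    (hloc : ∀ v i, v ∉ P i → ((G.neighborSet v ∩ P i).ncard : ℝ) ≤ d) :
    ∃ U : ι → Set V,
      (∀ i, U i ⊆ P i) ∧ (∀ i, (U i).ncard = s) ∧
      (∀ v ∈ ⋃ i, U i,
        ((G.neighborSet v ∩ ⋃ i, U i).ncard : ℝ) ≤ (Δ : ℝ) / 2 + (Δ : ℝ) ^ (2 / 3 : ℝ)) ∧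
      (∀ v ∈ ⋃ i, U i, ∀ i, v ∉ P i →
        ((G.neighborSet v ∩ U i).ncard : ℝ) ≤ d / 2 + d ^ (2 / 3 : ℝ)) := by
  classical
  have := Fintype.ofFinite V
  have := Fintype.ofFinite ι
  let part (v : V) : ι := (Φ v).1.1
  let F (i : ι) : Finset V := {v | part v = i}
  have hPF (i : ι) : P i = F i := by ext v; simp [F, part, hP]
  have hlocal (v : V) (i : ι) (S : Finset V) :
      (G.neighborSet v ∩ ↑(F i ∩ S)).ncard = #({u ∈ G.neighborFinset v | part u = i} ∩ S) := by
    rw [G.ncard_neighborSet_inter_coe, ← inter_assoc, inter_filter, inter_univ]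
  obtain ⟨ω, hωdeg, hωloc⟩ := exists_selection_degree_le G part Φ hlog hΔ hd
    (fun v => G.ncard_neighborSet v ▸ hdeg v)
    (fun v i hi => by
      have := hloc v i ((hP v i).not.mpr hi)
      rwa [hPF i, ← inter_univ (F i), hlocal, inter_univ] at this)
  have hU : ⋃ i, (↑(F i ∩ selection Φ ω) : Set V) = ↑(selection Φ ω) := by ext; simp [F]
  refine ⟨fun i => ↑(F i ∩ selection Φ ω), fun i => ?_, fun i => ?_, fun v _ => ?_,
    fun v _ i hi => ?_⟩
  · rw [hPF i]
    exact coe_subset.mpr inter_subset_left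
  · rw [Set.ncard_coe_finset, inter_comm, inter_filter, inter_univ,
      card_filter_selection Φ (fun k => k.1 = i), card_filter, Fintype.sum_prod_type]
    simp [apply_ite card]
  · rw [hU, G.ncard_neighborSet_inter_coe]
    exact hωdeg v
  · rw [hlocal]
    exact hωloc v i ((hP v i).not.mp hi)

/-- Halving lemma: for sufficiently large Δ, in a multipartite graph with maximum
degree at most Δ, parts of size exactly 2s, and local degree at most d where
d > (log Δ)^4, there are subsets U_i ⊆ V_i of size s such that the induced subgraph
has maximum degree at most Δ/2 + Δ^{2/3} and local degree at most d/2 + d^{2/3}. -/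
theorem stmt_12 : ∃ Δ₀ : ℕ, ∀ Δ : ℕ, Δ₀ ≤ Δ →
    ∀ (V ι : Type) [Finite V] (G : SimpleGraph V) (P : ι → Set V) (s : ℕ) (d : ℝ),
      (∀ v, ∃! i, v ∈ P i) →
      (∀ v, (G.neighborSet v).ncard ≤ Δ) →
      (∀ (v : V) (i : ι), v ∉ P i → ((G.neighborSet v ∩ P i).ncard : ℝ) ≤ d) →
      (∀ i, (P i).ncard = 2 * s) →
      (Real.log Δ) ^ 4 < d →
      ∃ U : ι → Set V,
        (∀ i, U i ⊆ P i) ∧ (∀ i, (U i).ncard = s) ∧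
        (∀ v ∈ ⋃ i, U i,
          (((G.neighborSet v) ∩ ⋃ i, U i).ncard : ℝ) ≤ (Δ : ℝ) / 2 + (Δ : ℝ) ^ ((2 : ℝ) / 3)) ∧
        (∀ v ∈ ⋃ i, U i, ∀ i, v ∉ P i →
          (((G.neighborSet v) ∩ U i).ncard : ℝ) ≤ d / 2 + d ^ ((2 : ℝ) / 3)) := by
  obtain ⟨Δ₀, hΔ₀⟩ := eventually_atTop.mp eventually_le_log_and_log_pow_four_le
  refine ⟨Δ₀, fun Δ hΔ V ι _ G P s d hP hdeg hloc hcard hd => ?_⟩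
  obtain ⟨Φ, hΦ⟩ := exists_equiv_prod_bool_of_ncard_eq hP hcard
  rcases s.eq_zero_or_pos with rfl | hs
  · have := Φ.isEmpty
    exact ⟨fun _ => ∅, by simp, by simp, fun v => isEmptyElim v, fun v => isEmptyElim v⟩
  have : NeZero s := ⟨hs.ne'⟩
  have : Finite ((ι × Fin s) × Bool) := Finite.of_equiv V Φ
  have : Finite (ι × Fin s) := Finite.prod_left Bool
  have : Finite ι := Finite.prod_left (Fin s)
  exact exists_halving_of_equiv G Φ hΦ (hΔ₀ Δ hΔ).1 (hΔ₀ Δ hΔ).2 hd.le hdeg hloc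
end

section
/- Let real sequences satisfy d_0 = γΔ and d_{t+1} = d_t/2 + d_t^{2/3}, and let j be the integer with 2^{j-1} < γ^{4/3}Δ ≤ 2^j. If γ is sufficiently small (so that γΔ/2^j > γ^{-1/3}/2 is large), then d_j ≤ 8γΔ/2^j ≤ 8(Δ/2^j)^{1/4}. -/
/-!
The cube roots `e t = d t ^ (1/3)` satisfy `e (t+1) ^ 3 = e t ^ 3 / 2 + e t ^ 2`, which gives the
affine contraction `e (t+1) ≤ 2^(-1/3) e t + 2/3` and hence `e t ≤ 2^(-t/3) e 0 + 4`. As long as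
`d 0 / 2^t ≥ 64` the geometric term dominates the constant, so `d t ≤ 8 d 0 / 2^t`; for `γ < 128⁻³`
the lower bound on `2^j` makes `d 0 / 2^j = γΔ / 2^j > γ^(-1/3) / 2` that large. The last inequality
is `γ ≤ (2^j / Δ)^(3/4)`, a rewriting of the upper bound on `2^j`.
-/

open Real

lemma cube_add_sq_le_cube {u c x : ℝ} (hu : 0 ≤ u) (hc : 0 ≤ c) (hx : 0 ≤ x)
    (huc : 1 ≤ 3 * u ^ 2 * c) : u ^ 3 * x ^ 3 + x ^ 2 ≤ (u * x + c) ^ 3 := by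
  have hx2 : x ^ 2 ≤ 3 * u ^ 2 * c * x ^ 2 := le_mul_of_one_le_left (sq_nonneg x) huc
  nlinarith [mul_nonneg (mul_nonneg hu (sq_nonneg c)) hx, pow_nonneg hc 3]

lemma le_pow_mul_add_of_le_mul_add {x : ℕ → ℝ} {u c B : ℝ} (hu : 0 ≤ u) (hB : 0 ≤ B)
    (hcB : c ≤ (1 - u) * B) (hx : ∀ n, x (n + 1) ≤ u * x n + c) (n : ℕ) :
    x n ≤ u ^ n * x 0 + B := by
  induction n with
  | zero => simpa using hB
  | succ n ih =>
    calc x (n + 1) ≤ u * x n + c := hx n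
      _ ≤ u * (u ^ n * x 0 + B) + c := by gcongr
      _ ≤ u ^ (n + 1) * x 0 + B := by rw [pow_succ]; linarith

lemma rpow_one_third_pow_three {x : ℝ} (hx : 0 ≤ x) : (x ^ ((1 : ℝ) / 3)) ^ 3 = x := by
  simpa [one_div] using rpow_inv_natCast_pow hx (n := 3) three_ne_zero

lemma rpow_two_thirds_eq_sq {x : ℝ} (hx : 0 ≤ x) :
    x ^ ((2 : ℝ) / 3) = (x ^ ((1 : ℝ) / 3)) ^ 2 := by
  rw [← rpow_natCast, ← rpow_mul hx]
  norm_num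

lemma mul_le_rpow_one_fourth_of_rpow_four_thirds_mul_le_one {γ X : ℝ} (hγ : 0 ≤ γ)
    (hX : 0 < X) (h : γ ^ ((4 : ℝ) / 3) * X ≤ 1) : γ * X ≤ X ^ ((1 : ℝ) / 4) := by
  have hγX : γ * X ^ ((3 : ℝ) / 4) ≤ 1 := by
    have : γ * X ^ ((3 : ℝ) / 4) = (γ ^ ((4 : ℝ) / 3) * X) ^ ((3 : ℝ) / 4) := by
      rw [mul_rpow (rpow_nonneg hγ _) hX.le, ← rpow_mul hγ]; norm_num
    rw [this]
    exact rpow_le_one (by positivity) h (by norm_num)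
  have hsplit : X = X ^ ((3 : ℝ) / 4) * X ^ ((1 : ℝ) / 4) := by
    rw [← rpow_add hX]; norm_num
  calc γ * X = (γ * X ^ ((3 : ℝ) / 4)) * X ^ ((1 : ℝ) / 4) := by
        nth_rw 1 [hsplit]; ring
    _ ≤ X ^ ((1 : ℝ) / 4) := mul_le_of_le_one_left (by positivity) hγX

section Recursion

variable {d : ℕ → ℝ}

lemma pos_of_recursion (hrec : ∀ t, d (t + 1) = d t / 2 + d t ^ ((2 : ℝ) / 3))
    (h0 : 0 < d 0) (t : ℕ) : 0 < d t := by
  induction t with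
  | zero => exact h0
  | succ t ih => rw [hrec t]; positivity

lemma rpow_one_third_succ_le (hrec : ∀ t, d (t + 1) = d t / 2 + d t ^ ((2 : ℝ) / 3))
    (h0 : 0 < d 0) {u : ℝ} (hu : 0 ≤ u) (hu3 : u ^ 3 = 1 / 2) (t : ℕ) :
    d (t + 1) ^ ((1 : ℝ) / 3) ≤ u * d t ^ ((1 : ℝ) / 3) + 2 / 3 := by
  have hd := pos_of_recursion hrec h0
  set e : ℕ → ℝ := fun t ↦ d t ^ ((1 : ℝ) / 3) with he
  have he3 (t : ℕ) : e t ^ 3 = d t := rpow_one_third_pow_three (hd t).le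
  have he0 : 0 ≤ e t := rpow_nonneg (hd t).le _
  -- `u ≤ 1`, so `u ^ 2 ≥ u ^ 3 = 1 / 2`
  have hu2 : 1 ≤ 3 * u ^ 2 * (2 / 3) := by nlinarith
  have hcube : e (t + 1) ^ 3 ≤ (u * e t + 2 / 3) ^ 3 := by
    calc e (t + 1) ^ 3 = u ^ 3 * e t ^ 3 + e t ^ 2 := by
          rw [he3, he3, hrec, hu3, he, rpow_two_thirds_eq_sq (hd t).le]; ring
      _ ≤ (u * e t + 2 / 3) ^ 3 := cube_add_sq_le_cube hu (by norm_num) he0 hu2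
  exact (pow_le_pow_iff_left₀ (rpow_nonneg (hd _).le _) (by positivity) three_ne_zero).1 hcube

lemma rpow_one_third_le_geometric (hrec : ∀ t, d (t + 1) = d t / 2 + d t ^ ((2 : ℝ) / 3))
    (h0 : 0 < d 0) {u : ℝ} (hu : 0 ≤ u) (hu3 : u ^ 3 = 1 / 2) (t : ℕ) :
    d t ^ ((1 : ℝ) / 3) ≤ u ^ t * d 0 ^ ((1 : ℝ) / 3) + 4 := by
  have hu56 : u ≤ 5 / 6 :=
    le_of_pow_le_pow_left₀ three_ne_zero (by norm_num) (by rw [hu3]; norm_num)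
  exact le_pow_mul_add_of_le_mul_add (x := fun t ↦ d t ^ ((1 : ℝ) / 3)) hu (by norm_num)
    (by linarith) (rpow_one_third_succ_le hrec h0 hu hu3) t

lemma le_eight_mul_div_two_pow (hrec : ∀ t, d (t + 1) = d t / 2 + d t ^ ((2 : ℝ) / 3))
    {t : ℕ} (ht : 64 * 2 ^ t ≤ d 0) : d t ≤ 8 * d 0 / 2 ^ t := by
  have h0 : 0 < d 0 := lt_of_lt_of_le (by positivity) ht
  set u : ℝ := (1 / 2) ^ ((1 : ℝ) / 3)
  have hu : 0 ≤ u := by positivity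
  have hu3 : u ^ 3 = 1 / 2 := rpow_one_third_pow_three (by norm_num)
  set m := u ^ t * d 0 ^ ((1 : ℝ) / 3)
  have hm3 : m ^ 3 = d 0 / 2 ^ t := by
    rw [mul_pow, ← pow_mul, mul_comm t, pow_mul, hu3, rpow_one_third_pow_three h0.le,
      one_div, inv_pow, div_eq_mul_inv, mul_comm]
  have hm : 4 ≤ m := by
    have : (4 : ℝ) ^ 3 ≤ m ^ 3 := by rw [hm3, le_div_iff₀ (by positivity)]; linarith
    exact le_of_pow_le_pow_left₀ three_ne_zero (by positivity) this
  calc d t = (d t ^ ((1 : ℝ) / 3)) ^ 3 :=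
        (rpow_one_third_pow_three (pos_of_recursion hrec h0 t).le).symm
    _ ≤ (2 * m) ^ 3 := by
        gcongr
        · exact rpow_nonneg (pos_of_recursion hrec h0 t).le _
        · linarith [rpow_one_third_le_geometric hrec h0 hu hu3 t]
    _ = 8 * d 0 / 2 ^ t := by rw [mul_pow, hm3]; ring

end Recursion

lemma sixty_four_mul_two_pow_le_mul {γ Δ : ℝ} {j : ℕ} (hγ : 0 < γ) (hγ₀ : γ < (1 / 128) ^ 3)
    (hj : 1 ≤ j) (hlow : (2 : ℝ) ^ (j - 1) < γ ^ ((4 : ℝ) / 3) * Δ) : 64 * 2 ^ j ≤ γ * Δ := by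
  have hcbrt : γ ^ ((1 : ℝ) / 3) < 1 / 128 :=
    (pow_lt_pow_iff_left₀ (rpow_nonneg hγ.le _) (by norm_num) three_ne_zero).1
      (by rwa [rpow_one_third_pow_three hγ.le])
  have hsplit : γ ^ ((4 : ℝ) / 3) * Δ = γ ^ ((1 : ℝ) / 3) * (γ * Δ) := by
    rw [show (4 : ℝ) / 3 = 1 / 3 + 1 by norm_num, rpow_add hγ, rpow_one]; ring
  have hγΔ : 0 < γ * Δ :=
    pos_of_mul_pos_right (hsplit ▸ lt_trans (by positivity) hlow) (by positivity)
  have h2j : (2 : ℝ) ^ j = 2 * 2 ^ (j - 1) := by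
    rw [← pow_succ', Nat.sub_add_cancel hj]
  rw [hsplit] at hlow
  nlinarith

/-- With d_0 = γΔ, d_{t+1} = d_t/2 + d_t^{2/3} and j the integer with
2^{j-1} < γ^{4/3}Δ ≤ 2^j, if γ is sufficiently small then
d_j ≤ 8γΔ/2^j ≤ 8(Δ/2^j)^{1/4}. -/
theorem stmt_18 : ∃ γ₀ : ℝ, 0 < γ₀ ∧
    ∀ γ Δ : ℝ, 0 < γ → γ < γ₀ → γ ^ (-(4 : ℝ) / 3) < Δ →
      ∀ j : ℕ, 1 ≤ j →
        (2 : ℝ) ^ (j - 1) < γ ^ ((4 : ℝ) / 3) * Δ →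
        γ ^ ((4 : ℝ) / 3) * Δ ≤ (2 : ℝ) ^ j →
        ∀ d : ℕ → ℝ, d 0 = γ * Δ →
          (∀ t, d (t + 1) = d t / 2 + d t ^ ((2 : ℝ) / 3)) →
          d j ≤ 8 * γ * Δ / 2 ^ j ∧
          8 * γ * Δ / 2 ^ j ≤ 8 * (Δ / 2 ^ j) ^ ((1 : ℝ) / 4) := by
  refine ⟨(1 / 128) ^ 3, by norm_num, ?_⟩
  intro γ Δ hγ hγ₀ _ j hj hlow hhigh d hd0 hrec
  have hγΔ := sixty_four_mul_two_pow_le_mul hγ hγ₀ hj hlow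
  have hΔ : 0 < Δ := pos_of_mul_pos_right (lt_of_lt_of_le (by positivity) hγΔ) hγ.le
  refine ⟨?_, ?_⟩
  · rw [mul_assoc, ← hd0]
    exact le_eight_mul_div_two_pow hrec (hd0 ▸ hγΔ)
  · have hX : γ ^ ((4 : ℝ) / 3) * (Δ / 2 ^ j) ≤ 1 := by
      rwa [← mul_div_assoc, div_le_one (by positivity)]
    calc 8 * γ * Δ / 2 ^ j = 8 * (γ * (Δ / 2 ^ j)) := by ring
      _ ≤ 8 * (Δ / 2 ^ j) ^ ((1 : ℝ) / 4) := by
        gcongr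
        exact mul_le_rpow_one_fourth_of_rpow_four_thirds_mul_le_one hγ.le (by positivity) hX
end

section
/- Let real sequences satisfy Δ_0 = Δ, d_0 = γΔ, Δ_{t+1} = Δ_t/2 + Δ_t^{2/3}, d_{t+1} = d_t/2 + d_t^{2/3}, and let j satisfy 2^{j-1} < γ^{4/3}Δ ≤ 2^j with γ^{-4/3} < Δ. Then for every 0 ≤ t < j: d_t ≥ γΔ/2^t ≥ (Δ/2^t)^{1/4}, and since Δ_t ≤ (1+ε/4)Δ/2^t for small γ, it follows that d_t > (log Δ_t)^4 when γ is sufficiently small. -/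
/-!
Write `y_t = Δ / 2 ^ t`. For `t < j` the choice of `j` gives `y_t > γ ^ (-4/3)`, which
implies `γ y_t ≥ y_t ^ (1/4)`; making `γ` small makes this threshold, hence every `y_t`,
as large as we like. The lower bound `d_t ≥ γ y_t` only uses `d_{t+1} ≥ d_t / 2`. For the
upper bound, `A_t ≤ y_t + 16 y_t ^ (2/3)` propagates along the recursion as long as `y_t` is
large, because `(8 + 2 ^ (2/3)) 2 ^ (2/3) < 16`; since `y ^ (2/3) = o(y)` this gives
`A_t ≤ (1 + ε/4) y_t`. Finally `log (A_t) ^ 4 ≤ log ((1 + ε/4) y_t) ^ 4 < y_t ^ (1/4) ≤ d_t`,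
as `log ^ 4 = o(y ^ (1/4))`.
-/

open Real Filter Asymptotics

lemma eventually_mul_rpow_le_mul {p : ℝ} (hp : p < 1) (k : ℝ) {c : ℝ} (hc : 0 < c) :
    ∀ᶠ y in atTop, k * y ^ p ≤ c * y := by
  filter_upwards [(tendsto_rpow_atTop (sub_pos.2 hp)).eventually_ge_atTop (k / c),
    eventually_gt_atTop 0] with y hy hy0
  calc k * y ^ p = c * (k / c) * y ^ p := by field_simp
    _ ≤ c * y ^ (1 - p) * y ^ p := by gcongr
    _ = c * y := by rw [mul_assoc, ← rpow_add hy0, sub_add_cancel, rpow_one]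

lemma eventually_log_mul_pow_lt {C s : ℝ} (hC : 0 < C) (hs : 0 < s) (n : ℕ) :
    ∀ᶠ y in atTop, log (C * y) ^ n < y ^ s := by
  have hlo := (isLittleO_log_rpow_rpow_atTop n hs).comp_tendsto (tendsto_id.const_mul_atTop hC)
  have hc : 0 < (2 * C ^ s)⁻¹ := by positivity
  filter_upwards [hlo.bound hc, eventually_gt_atTop 0] with y hy hy0
  have hCs : 0 < C ^ s := rpow_pos_of_pos hC s
  have hys : 0 < y ^ s := rpow_pos_of_pos hy0 s
  simp only [Function.comp_apply, id, rpow_natCast, norm_pow, norm_eq_abs,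
    mul_rpow hC.le hy0.le, abs_of_pos (mul_pos hCs hys)] at hy
  calc log (C * y) ^ n ≤ |log (C * y)| ^ n := by rw [← abs_pow]; exact le_abs_self _
    _ ≤ (2 * C ^ s)⁻¹ * (C ^ s * y ^ s) := hy
    _ = y ^ s / 2 := by field_simp
    _ < y ^ s := by linarith

lemma eventually_large_scale_bounds {ε : ℝ} (hε : 0 < ε) :
    ∀ᶠ y : ℝ in atTop, 1 ≤ y ∧ 16 * y ^ ((2 : ℝ) / 3) ≤ y ∧
      16 * y ^ ((2 : ℝ) / 3) ≤ ε / 4 * y ∧ log ((1 + ε / 4) * y) ^ 4 < y ^ ((1 : ℝ) / 4) := by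
  have htwo_thirds : (2 : ℝ) / 3 < 1 := by norm_num
  have hdom : ∀ᶠ y : ℝ in atTop, 16 * y ^ ((2 : ℝ) / 3) ≤ y := by
    simpa only [one_mul] using eventually_mul_rpow_le_mul htwo_thirds 16 one_pos
  exact (eventually_ge_atTop 1).and <| hdom.and <|
    (eventually_mul_rpow_le_mul htwo_thirds 16 (by positivity)).and <|
      eventually_log_mul_pow_lt (by positivity) (by norm_num) 4

lemma exists_pos_forall_le_rpow_of_neg (N : ℝ) {p : ℝ} (hp : p < 0) :
    ∃ γ₀ > 0, ∀ γ, 0 < γ → γ < γ₀ → N ≤ γ ^ p := by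
  obtain ⟨γ₀, hγ₀, hsub⟩ := mem_nhdsGT_iff_exists_Ioo_subset.1 <|
    (tendsto_rpow_neg_nhdsGT_zero hp).eventually_ge_atTop N
  exact ⟨γ₀, hγ₀, fun γ hγ hγγ₀ => hsub ⟨hγ, hγγ₀⟩⟩

lemma rpow_neg_lt_div_two_pow {γ Δ p : ℝ} (hγ : 0 < γ) {t : ℕ}
    (h : (2 : ℝ) ^ t < γ ^ p * Δ) :
    γ ^ (-p) < Δ / 2 ^ t := by
  rw [rpow_neg hγ.le, lt_div_iff₀ (by positivity), inv_mul_lt_iff₀ (rpow_pos_of_pos hγ p)]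
  linarith

lemma rpow_one_div_four_le_mul {γ y : ℝ} (hγ : 0 < γ) (h : γ ^ (-(4 : ℝ) / 3) < y) :
    y ^ ((1 : ℝ) / 4) ≤ γ * y := by
  have hy : 0 < y := (rpow_pos_of_pos hγ _).trans h
  have h34 : γ⁻¹ < y ^ ((3 : ℝ) / 4) := by
    have := rpow_lt_rpow (rpow_pos_of_pos hγ _).le h (by norm_num : (0 : ℝ) < 3 / 4)
    rwa [← rpow_mul hγ.le, show -(4 : ℝ) / 3 * (3 / 4) = -1 by norm_num, rpow_neg_one] at this
  have h1 : 1 < γ * y ^ ((3 : ℝ) / 4) := by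
    simpa [mul_inv_cancel₀ hγ.ne'] using mul_lt_mul_of_pos_left h34 hγ
  calc y ^ ((1 : ℝ) / 4) = 1 * y ^ ((1 : ℝ) / 4) := (one_mul _).symm
    _ ≤ γ * y ^ ((3 : ℝ) / 4) * y ^ ((1 : ℝ) / 4) := by gcongr
    _ = γ * y := by rw [mul_assoc, ← rpow_add hy]; norm_num

lemma two_rpow_two_div_three_le : (2 : ℝ) ^ ((2 : ℝ) / 3) ≤ 8 / 5 := by
  have hcube : ((2 : ℝ) ^ ((2 : ℝ) / 3)) ^ 3 = 4 := by
    rw [← rpow_natCast, ← rpow_mul zero_le_two]; norm_num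
  by_contra! h
  have := pow_lt_pow_left₀ h (by norm_num) three_ne_zero
  norm_num [hcube] at this

lemma half_add_rpow_le {x y : ℝ} (hx : 0 ≤ x) (hy : 16 * y ^ ((2 : ℝ) / 3) ≤ y)
    (hxy : x ≤ y + 16 * y ^ ((2 : ℝ) / 3)) :
    x / 2 + x ^ ((2 : ℝ) / 3) ≤ y / 2 + 16 * (y / 2) ^ ((2 : ℝ) / 3) := by
  have hy0 : 0 ≤ y := by linarith
  set c : ℝ := (2 : ℝ) ^ ((2 : ℝ) / 3)
  have hc : 0 < c := rpow_pos_of_pos two_pos _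
  have hz : 0 ≤ y ^ ((2 : ℝ) / 3) := rpow_nonneg hy0 _
  have hx2 : x ^ ((2 : ℝ) / 3) ≤ c * y ^ ((2 : ℝ) / 3) := by
    rw [← mul_rpow zero_le_two hy0]
    exact rpow_le_rpow hx (by linarith) (by norm_num)
  have hcoef : (8 + c) * c ≤ 16 := by nlinarith [two_rpow_two_div_three_le]
  have hgain : (8 + c) * y ^ ((2 : ℝ) / 3) ≤ 16 * y ^ ((2 : ℝ) / 3) / c := by
    rw [le_div_iff₀ hc]
    nlinarith [mul_le_mul_of_nonneg_left hcoef hz]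
  rw [div_rpow hy0 zero_le_two, mul_div_assoc']
  linarith

section

variable {f : ℕ → ℝ} {a : ℝ}

lemma div_two_pow_le_of_rec (h0 : f 0 = a)
    (hrec : ∀ t, f (t + 1) = f t / 2 + f t ^ ((2 : ℝ) / 3)) (ha : 0 ≤ a) (t : ℕ) :
    a / 2 ^ t ≤ f t := by
  induction t with
  | zero => simp [h0]
  | succ n ih =>
    have hfn : 0 ≤ f n := (div_nonneg ha (by positivity)).trans ih
    rw [hrec, pow_succ, ← div_div]
    linarith [rpow_nonneg hfn ((2 : ℝ) / 3)]

lemma le_div_two_pow_add_of_rec (h0 : f 0 = a)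
    (hrec : ∀ t, f (t + 1) = f t / 2 + f t ^ ((2 : ℝ) / 3)) (ha : 0 ≤ a) (t : ℕ)
    (hlarge : ∀ s < t, 16 * (a / 2 ^ s) ^ ((2 : ℝ) / 3) ≤ a / 2 ^ s) :
    f t ≤ a / 2 ^ t + 16 * (a / 2 ^ t) ^ ((2 : ℝ) / 3) := by
  induction t with
  | zero => simp [h0, rpow_nonneg ha]
  | succ n ih =>
    rw [hrec, pow_succ, ← div_div]
    have hfn := (div_nonneg ha (by positivity)).trans (div_two_pow_le_of_rec h0 hrec ha n)
    exact half_add_rpow_le hfn (hlarge n n.lt_succ_self)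
      (ih fun s hs => hlarge s (hs.trans n.lt_succ_self))

end

/-- With Δ_0 = Δ, d_0 = γΔ, Δ_{t+1} = Δ_t/2 + Δ_t^{2/3}, d_{t+1} = d_t/2 + d_t^{2/3},
and j the integer with 2^{j-1} < γ^{4/3}Δ ≤ 2^j (where γ^{-4/3} < Δ), for γ
sufficiently small (given ε) and every 0 ≤ t < j:
(Δ/2^t)^{1/4} ≤ γΔ/2^t ≤ d_t, Δ_t ≤ (1+ε/4)Δ/2^t, and d_t > (log Δ_t)^4. -/
theorem stmt_19 (ε : ℝ) (hε : 0 < ε) : ∃ γ₀ : ℝ, 0 < γ₀ ∧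
    ∀ γ Δ : ℝ, 0 < γ → γ < γ₀ → γ ^ (-(4 : ℝ) / 3) < Δ →
      ∀ j : ℕ, 1 ≤ j →
        (2 : ℝ) ^ (j - 1) < γ ^ ((4 : ℝ) / 3) * Δ →
        γ ^ ((4 : ℝ) / 3) * Δ ≤ (2 : ℝ) ^ j →
        ∀ A d : ℕ → ℝ, A 0 = Δ → d 0 = γ * Δ →
          (∀ t, A (t + 1) = A t / 2 + A t ^ ((2 : ℝ) / 3)) →
          (∀ t, d (t + 1) = d t / 2 + d t ^ ((2 : ℝ) / 3)) →
          ∀ t : ℕ, t < j →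
            (Δ / 2 ^ t) ^ ((1 : ℝ) / 4) ≤ γ * Δ / 2 ^ t ∧
            γ * Δ / 2 ^ t ≤ d t ∧
            A t ≤ (1 + ε / 4) * Δ / 2 ^ t ∧
            (Real.log (A t)) ^ 4 < d t := by
  obtain ⟨N, hN⟩ := (eventually_large_scale_bounds hε).exists_forall_of_atTop
  obtain ⟨γ₀, hγ₀, hsmall⟩ :=
    exists_pos_forall_le_rpow_of_neg N (by norm_num : -(4 : ℝ) / 3 < 0)
  refine ⟨γ₀, hγ₀, fun γ Δ hγ hγγ₀ hΔ j _ hj _ A d hA0 hd0 hA hd t ht => ?_⟩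
  set y : ℕ → ℝ := fun s => Δ / 2 ^ s
  have hy : ∀ s < j, γ ^ (-(4 : ℝ) / 3) < y s := fun s hs => by
    rw [neg_div]
    exact rpow_neg_lt_div_two_pow hγ ((pow_le_pow_right₀ one_le_two (by omega)).trans_lt hj)
  have hyN : ∀ s < j, N ≤ y s := fun s hs => ((hsmall γ hγ hγγ₀).trans_lt (hy s hs)).le
  have hΔ0 : 0 ≤ Δ := ((rpow_pos_of_pos hγ _).trans hΔ).le
  obtain ⟨hy1, -, hdomε, hlog⟩ := hN (y t) (hyN t ht)
  have hAup : A t ≤ y t + 16 * y t ^ ((2 : ℝ) / 3) :=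
    le_div_two_pow_add_of_rec hA0 hA hΔ0 t fun s hs => (hN (y s) (hyN s (hs.trans ht))).2.1
  have hAlow : y t ≤ A t := div_two_pow_le_of_rec hA0 hA hΔ0 t
  have hquarter : y t ^ ((1 : ℝ) / 4) ≤ γ * Δ / 2 ^ t := by
    rw [mul_div_assoc]; exact rpow_one_div_four_le_mul hγ (hy t ht)
  have hdlow : γ * Δ / 2 ^ t ≤ d t := div_two_pow_le_of_rec hd0 hd (by positivity) t
  have hAε : A t ≤ (1 + ε / 4) * Δ / 2 ^ t := by
    rw [mul_div_assoc]; linarith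
  refine ⟨hquarter, hdlow, hAε, ?_⟩
  calc log (A t) ^ 4 ≤ log ((1 + ε / 4) * y t) ^ 4 := by
        gcongr
        · exact log_nonneg (hy1.trans hAlow)
        · linarith
        · rwa [← mul_div_assoc]
    _ < y t ^ ((1 : ℝ) / 4) := hlog
    _ ≤ d t := hquarter.trans hdlow
end
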